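/- arXiv:1211.2539 — 5 statements merged into one kernel-verified Lean document; each statement's English description precedes it below -/
import Mathlib

section
/- Let c : ℕ → ℤ be a sequence. Suppose there exist positive integers p, p', polynomials P, P' ∈ ℚ[X] and a threshold n_0 such that ∑_{l=0}^{pn-1} c_l = P(n) and ∑_{l=0}^{p'n-1} c_l = P'(n) for all n ≥ n_0. Then P(0) = P'(0). In other words, the periodic constant of the series ∑ c_l t^l is independent of the chosen period. -/
/-!
Both `P(p' n)` and `P'(p n)` equal the partial sum up to `p p' n` for large `n`, so the
polynomials `P(p' X)` and `P'(p X)` agree at infinitely many points and hence coincide;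
evaluating them at `0` gives `P(0) = P'(0)`.
-/

open Polynomial

theorem Polynomial.eq_of_eval_natCast_eq_of_le {R : Type*} [CommRing R] [IsDomain R] [CharZero R]
    {P Q : R[X]} (n₀ : ℕ) (h : ∀ n : ℕ, n₀ ≤ n → P.eval (n : R) = Q.eval (n : R)) : P = Q := by
  refine eq_of_infinite_eval_eq P Q (Set.Infinite.mono ?_ ((Set.Ici_infinite n₀).image
    (Nat.cast_injective (R := R)).injOn))
  rintro _ ⟨n, hn, rfl⟩
  exact h n hn

theorem Polynomial.comp_C_mul_X_eq_of_eval_eq_mul {R : Type*} [CommRing R] [IsDomain R]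
    [CharZero R] (f : ℕ → R) {p p' : ℕ} (hp : 0 < p) (hp' : 0 < p') {P P' : R[X]} (n₀ : ℕ)
    (hP : ∀ n : ℕ, n₀ ≤ n → f (p * n) = P.eval (n : R))
    (hP' : ∀ n : ℕ, n₀ ≤ n → f (p' * n) = P'.eval (n : R)) :
    P.comp (C (p' : R) * X) = P'.comp (C (p : R) * X) := by
  refine eq_of_eval_natCast_eq_of_le n₀ fun n hn ↦ ?_
  have hpn : n₀ ≤ p * n := hn.trans (Nat.le_mul_of_pos_left n hp)
  have hp'n : n₀ ≤ p' * n := hn.trans (Nat.le_mul_of_pos_left n hp')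
  calc (P.comp (C (p' : R) * X)).eval (n : R)
      = f (p * (p' * n)) := by rw [hP _ hp'n]; simp
    _ = f (p' * (p * n)) := by rw [Nat.mul_left_comm]
    _ = (P'.comp (C (p : R) * X)).eval (n : R) := by rw [hP' _ hpn]; simp

/-- The periodic constant of a series is independent of the chosen period:
if for two periods `p, p'` the counting functions agree with polynomials `P, P'`
for all large `n`, then `P(0) = P'(0)`. -/
theorem stmt4 (c : ℕ → ℤ) (p p' : ℕ) (hp : 0 < p) (hp' : 0 < p')
    (P P' : Polynomial ℚ) (n₀ : ℕ)
    (hP : ∀ n : ℕ, n₀ ≤ n → ∑ l ∈ Finset.range (p * n), (c l : ℚ) = P.eval (n : ℚ))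
    (hP' : ∀ n : ℕ, n₀ ≤ n → ∑ l ∈ Finset.range (p' * n), (c l : ℚ) = P'.eval (n : ℚ)) :
    P.eval 0 = P'.eval 0 := by
  have h := congrArg (eval 0)
    (comp_C_mul_X_eq_of_eval_eq_mul (fun m ↦ ∑ l ∈ Finset.range m, (c l : ℚ)) hp hp' n₀ hP hP')
  simpa only [eval_comp, eval_mul, eval_C, eval_X, mul_zero] using h
end

section
/- For every nonnegative integer λ, the number of triples (x, y, z) of nonnegative integers satisfying 21x + 14y + 6z < 42λ equals 7λ³ + 10λ² + 4λ. -/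
open Finset

private def trm (l x y : ℕ) : ℕ := (42*l - 21*x - 14*y + 5)/6

private def Tot (l : ℕ) : ℕ := ∑ x ∈ Finset.range (2*l), ∑ y ∈ Finset.range (3*l), trm l x y

private def Shl (l : ℕ) : ℕ :=
  ∑ x ∈ Finset.range (2*l+2), (trm (l+1) x 0 + trm (l+1) x 1 + trm (l+1) x 2)

private lemma shl_eq (l : ℕ) : Shl l = 21*l^2 + 41*l + 21 := by
  induction l with
  | zero => decide
  | succ n ih =>
    have h : Shl (n+1) = Shl n + (42*n + 62) := by
      unfold Shl
      have e1 : 2*(n+1)+2 = (2*n+2) + 1 + 1 := by ring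
      rw [e1, Finset.sum_range_succ', Finset.sum_range_succ']
      have e2 : ∀ x ∈ Finset.range (2*n+2),
          (trm (n+1+1) (x+1+1) 0 + trm (n+1+1) (x+1+1) 1 + trm (n+1+1) (x+1+1) 2)
          = (trm (n+1) x 0 + trm (n+1) x 1 + trm (n+1) x 2) := by
        intro x hx
        rw [Finset.mem_range] at hx
        simp only [trm]
        have h : 42*(n+1+1) - 21*(x+1+1) = 42*(n+1) - 21*x := by omega
        rw [h]
      rw [Finset.sum_congr rfl e2]
      have e3 : trm (n+1+1) (0+1) 0 + trm (n+1+1) (0+1) 1 + trm (n+1+1) (0+1) 2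
          + (trm (n+1+1) 0 0 + trm (n+1+1) 0 1 + trm (n+1+1) 0 2) = 42*n + 62 := by
        simp only [trm]; omega
      omega
    rw [h, ih]; ring

private lemma tot_succ (l : ℕ) : Tot (l+1) = Tot l + Shl l := by
  unfold Tot
  have inner : ∀ x, ∑ y ∈ Finset.range (3*(l+1)), trm (l+1) x y
      = (trm (l+1) x 0 + trm (l+1) x 1 + trm (l+1) x 2) + ∑ y ∈ Finset.range (3*l), trm l x y := by
    intro x
    have e1 : 3*(l+1) = 3*l + 1 + 1 + 1 := by ring
    rw [e1, Finset.sum_range_succ', Finset.sum_range_succ', Finset.sum_range_succ']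
    have e2 : ∀ y ∈ Finset.range (3*l), trm (l+1) x (y+1+1+1) = trm l x y := by
      intro y _
      simp only [trm]
      have h : 42*(l+1) - 21*x - 14*(y+1+1+1) = 42*l - 21*x - 14*y := by omega
      rw [h]
    rw [Finset.sum_congr rfl e2]
    norm_num
    ring
  calc ∑ x ∈ Finset.range (2*(l+1)), ∑ y ∈ Finset.range (3*(l+1)), trm (l+1) x y
      = ∑ x ∈ Finset.range (2*l+2),
          ((trm (l+1) x 0 + trm (l+1) x 1 + trm (l+1) x 2) + ∑ y ∈ Finset.range (3*l), trm l x y) := by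
        rw [show 2*(l+1) = 2*l+2 by ring]
        exact Finset.sum_congr rfl (fun x _ => inner x)
    _ = Shl l + ∑ x ∈ Finset.range (2*l+2), ∑ y ∈ Finset.range (3*l), trm l x y := by
        rw [Finset.sum_add_distrib]; rfl
    _ = Tot l + Shl l := by
        have e : ∑ x ∈ Finset.range (2*l+2), ∑ y ∈ Finset.range (3*l), trm l x y
            = Tot l := by
          rw [show 2*l+2 = (2*l)+1+1 by ring, Finset.sum_range_succ, Finset.sum_range_succ]
          have z1 : ∑ y ∈ Finset.range (3*l), trm l (2*l) y = 0 :=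
            Finset.sum_eq_zero (fun y _ => by simp only [trm]; omega)
          have z2 : ∑ y ∈ Finset.range (3*l), trm l (2*l+1) y = 0 :=
            Finset.sum_eq_zero (fun y _ => by simp only [trm]; omega)
          rw [z1, z2]; unfold Tot; ring
        rw [e]; ring

private lemma tot_eq (l : ℕ) : Tot l = 7*l^3 + 10*l^2 + 4*l := by
  induction l with
  | zero => decide
  | succ n ih => rw [tot_succ, ih, shl_eq]; ring

/-- The number of triples `(x,y,z)` of nonnegative integers with
`21x + 14y + 6z < 42λ` equals `7λ³ + 10λ² + 4λ`. -/
theorem stmt10 (l : ℕ) :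
    Set.ncard {p : ℕ × ℕ × ℕ | 21 * p.1 + 14 * p.2.1 + 6 * p.2.2 < 42 * l}
      = 7 * l ^ 3 + 10 * l ^ 2 + 4 * l := by
  classical
  set T : Finset (ℕ × ℕ × ℕ) :=
    (Finset.range (2*l) ×ˢ Finset.range (3*l) ×ˢ Finset.range (7*l)).filter
      (fun p => 21 * p.1 + 14 * p.2.1 + 6 * p.2.2 < 42 * l) with hT
  have hset : {p : ℕ × ℕ × ℕ | 21 * p.1 + 14 * p.2.1 + 6 * p.2.2 < 42 * l} = ↑T := by
    ext p
    simp only [hT, Set.mem_setOf_eq, Finset.coe_filter, Finset.mem_product, Finset.mem_range,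
      Set.mem_setOf_eq]
    constructor
    · intro h; exact ⟨⟨by omega, by omega, by omega⟩, h⟩
    · intro h; exact h.2
  rw [hset, Set.ncard_coe_finset]
  have hcard : T.card = Tot l := by
    rw [hT, Finset.card_filter, Finset.sum_product]
    simp only [Finset.sum_product]
    unfold Tot
    refine Finset.sum_congr rfl (fun x hx => Finset.sum_congr rfl (fun y hy => ?_))
    rw [Finset.mem_range] at hx hy
    have : ∑ z ∈ Finset.range (7*l),
        (if 21 * x + 14 * y + 6 * z < 42 * l then 1 else 0)
        = ((Finset.range (7*l)).filter (fun z => 21 * x + 14 * y + 6 * z < 42 * l)).card := by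
      rw [Finset.card_filter]
    rw [this]
    have hfe : (Finset.range (7*l)).filter (fun z => 21 * x + 14 * y + 6 * z < 42 * l)
        = Finset.range (trm l x y) := by
      ext z
      simp only [Finset.mem_filter, Finset.mem_range, trm]
      omega
    rw [hfe, Finset.card_range]
  rw [hcard, tot_eq]
end

section
/- Let l_1, l_2 be integers with l_2 ≤ l_1 ≤ 2·l_2. Then the number of pairs (x, y) of nonnegative integers such that x + 2y < l_1 or x + y < l_2 equals l_1²/2 + l_2² + l_1/2 − l_1·l_2. -/
/-!
Counting the admissible `x` row by row: for `y < l₂` the row `y` contains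
`(l₂ - y) + (l₁ - l₂ - y)` points (truncated subtraction, the second summand being the
excess of the condition `x + 2y < l₁` over `x + y < l₂`), and it is empty for `y ≥ l₂`.
Hence the count is the sum of two triangular numbers, `T(l₂) + T(l₁ - l₂)`.
-/

open Finset

theorem ncard_setOf_snd_lt_fst_lt (f : ℕ → ℕ) (n : ℕ) :
    {p : ℕ × ℕ | p.2 < n ∧ p.1 < f p.2}.ncard = ∑ y ∈ range n, f y := by
  have hset : {p : ℕ × ℕ | p.2 < n ∧ p.1 < f p.2}
      = ↑((range n).biUnion fun y => range (f y) ×ˢ {y}) := by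
    ext ⟨x, y⟩
    simp [and_comm]
  rw [hset, Set.ncard_coe_finset, card_biUnion]
  · simp
  · intro y₁ _ y₂ _ hne
    simpa [disjoint_left] using fun _ _ _ _ _ => hne.symm

theorem two_mul_sum_range_tsub {m n : ℕ} (hmn : m ≤ n) :
    2 * ∑ y ∈ range n, (m - y) = m * (m + 1) := by
  have htail : ∑ y ∈ range n, (m - y) = ∑ y ∈ range (m + 1), (m - y) := by
    rw [← sum_range_add_sum_Ico _ hmn, ← sum_range_add_sum_Ico _ (Nat.le_succ m)]
    simp +contextual [sum_eq_zero, Nat.sub_eq_zero_of_le]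
  have hreflect : ∑ y ∈ range (m + 1), (m - y) = ∑ y ∈ range (m + 1), y := by
    simpa using sum_range_reflect (fun j => j) (m + 1)
  rw [htail, hreflect, mul_comm, sum_range_id_mul_two]
  simp [mul_comm]

/-- For integers `l₂ ≤ l₁ ≤ 2l₂`, the number of pairs `(x,y)` of nonnegative
integers with `x + 2y < l₁` or `x + y < l₂` equals `l₁²/2 + l₂² + l₁/2 - l₁l₂`. -/
theorem stmt11 (l₁ l₂ : ℤ) (h1 : l₂ ≤ l₁) (h2 : l₁ ≤ 2 * l₂) :
    (Set.ncard {p : ℕ × ℕ |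
        (p.1 : ℤ) + 2 * (p.2 : ℤ) < l₁ ∨ (p.1 : ℤ) + (p.2 : ℤ) < l₂} : ℚ)
      = (l₁ : ℚ) ^ 2 / 2 + (l₂ : ℚ) ^ 2 + (l₁ : ℚ) / 2 - (l₁ : ℚ) * (l₂ : ℚ) := by
  lift l₂ to ℕ using by omega with b
  lift l₁ to ℕ using by omega with a
  have hrows : {p : ℕ × ℕ | (p.1 : ℤ) + 2 * (p.2 : ℤ) < a ∨ (p.1 : ℤ) + (p.2 : ℤ) < b}
      = {p : ℕ × ℕ | p.2 < b ∧ p.1 < (b - p.2) + (a - b - p.2)} := by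
    ext ⟨x, y⟩
    simp only [Set.mem_ofPred_eq]
    omega
  have hcount : 2 * ∑ y ∈ range b, ((b - y) + (a - b - y))
      = b * (b + 1) + (a - b) * (a - b + 1) := by
    rw [sum_add_distrib, mul_add, two_mul_sum_range_tsub le_rfl,
      two_mul_sum_range_tsub (by omega)]
  rw [hrows, ncard_setOf_snd_lt_fst_lt (fun y => (b - y) + (a - b - y))]
  have hcast := congrArg (Nat.cast : ℕ → ℚ) hcount
  push_cast [Nat.cast_sub (show b ≤ a by omega)] at hcast
  push_cast
  linarith
end

section
/- Let l_1, l_2 be integers with l_1 ≥ 0 and 2·l_2 ≤ l_1. Then the number of pairs (x, y) of nonnegative integers such that x + 2y < l_1 or x + y < l_2 equals l_1²/4 + l_1/2 + (1 + (−1)^{l_1+1})/8. -/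
private lemma sum_aux : ∀ n : ℕ, (∑ y ∈ Finset.range n, (n - 2*y)) = (n+1)^2/4
  | 0 => by simp
  | 1 => by simp
  | (n+2) => by
      have ih := sum_aux n
      rw [Finset.sum_range_succ']
      have h1 : ∀ i ∈ Finset.range (n+1), (n+2 - 2*(i+1)) = (n - 2*i) := by
        intro i _; omega
      rw [Finset.sum_congr rfl h1, Finset.sum_range_succ, ih]
      have h2 : (n+2+1)^2 = (n+1)^2 + 4*(n+2) := by ring
      omega

private lemma card_aux (n : ℕ) :
    ((Finset.range n ×ˢ Finset.range n).filter (fun p => p.1 + 2*p.2 < n)).card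
      = (n+1)^2/4 := by
  have hset : ((Finset.range n ×ˢ Finset.range n).filter (fun p => p.1 + 2*p.2 < n))
      = (Finset.range n).biUnion
        (fun y => (Finset.range (n - 2*y)).image (fun x => (x, y))) := by
    ext ⟨a, b⟩
    simp only [Finset.mem_filter, Finset.mem_product, Finset.mem_range,
      Finset.mem_biUnion, Finset.mem_image, Prod.mk.injEq]
    constructor
    · rintro ⟨⟨ha, hb⟩, h⟩
      exact ⟨b, hb, a, by omega, rfl, rfl⟩
    · rintro ⟨y, hy, x, hx, rfl, rfl⟩
      omega
  rw [hset, Finset.card_biUnion]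
  · have h1 : ∀ y ∈ Finset.range n,
        ((Finset.range (n - 2*y)).image (fun x => (x, y))).card = n - 2*y := by
      intro y _
      rw [Finset.card_image_of_injective _ (fun a b h => by
        simpa using congrArg Prod.fst h)]
      simp
    rw [Finset.sum_congr rfl h1, sum_aux]
  · intro y₁ _ y₂ _ hne
    simp only [Finset.disjoint_left, Finset.mem_image, Finset.mem_range]
    rintro ⟨a, b⟩ ⟨x, hx, h⟩ ⟨x', hx', h'⟩
    apply hne
    have := congrArg Prod.snd h
    have := congrArg Prod.snd h'
    simp_all

/-- For integers `l₁ ≥ 0` with `2l₂ ≤ l₁`, the number of pairs `(x,y)` of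
nonnegative integers with `x + 2y < l₁` or `x + y < l₂` equals
`l₁²/4 + l₁/2 + (1 + (-1)^{l₁+1})/8`. -/
theorem stmt12 (l₁ l₂ : ℤ) (h1 : 0 ≤ l₁) (h2 : 2 * l₂ ≤ l₁) :
    (Set.ncard {p : ℕ × ℕ |
        (p.1 : ℤ) + 2 * (p.2 : ℤ) < l₁ ∨ (p.1 : ℤ) + (p.2 : ℤ) < l₂} : ℚ)
      = (l₁ : ℚ) ^ 2 / 4 + (l₁ : ℚ) / 2 + (1 + (-1 : ℚ) ^ (l₁ + 1)) / 8 := by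
  set n := l₁.toNat with hn
  have hl : (n : ℤ) = l₁ := Int.toNat_of_nonneg h1
  have hSet : {p : ℕ × ℕ |
        (p.1 : ℤ) + 2 * (p.2 : ℤ) < l₁ ∨ (p.1 : ℤ) + (p.2 : ℤ) < l₂}
      = ↑((Finset.range n ×ˢ Finset.range n).filter (fun p => p.1 + 2*p.2 < n)) := by
    ext ⟨x, y⟩
    simp only [Set.mem_setOf_eq, Finset.coe_filter, Finset.mem_product,
      Finset.mem_range, Set.mem_setOf_eq, Finset.mem_coe, Finset.mem_filter]
    constructor
    · rintro (h | h)
      · have hx : (x : ℤ) + 2*(y : ℤ) < (n : ℤ) := by rw [hl]; exact h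
        have : x + 2*y < n := by exact_mod_cast hx
        exact ⟨⟨by omega, by omega⟩, this⟩
      · have hx : (x : ℤ) + 2*(y : ℤ) < (n : ℤ) := by rw [hl]; omega
        have : x + 2*y < n := by exact_mod_cast hx
        exact ⟨⟨by omega, by omega⟩, this⟩
    · rintro ⟨_, h⟩
      left
      have : ((x + 2*y : ℕ) : ℤ) < (n : ℤ) := by exact_mod_cast h
      rw [hl] at this; push_cast at this; omega
  rw [hSet, Set.ncard_coe_finset, card_aux]
  rw [← hl]
  have hpow : (-1 : ℚ) ^ ((n : ℤ) + 1) = (-1 : ℚ) ^ (n + 1) := by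
    rw [show ((n : ℤ) + 1) = ((n + 1 : ℕ) : ℤ) by push_cast; ring, zpow_natCast]
  rw [hpow]
  clear hn h2 hSet hpow
  clear_value n
  rcases Nat.even_or_odd n with ⟨k, hk⟩ | ⟨k, hk⟩
  · subst hk
    have hdiv : (k + k + 1)^2/4 = k*k + k := by
      have : (k + k + 1)^2 = 4*(k*k + k) + 1 := by ring
      omega
    rw [hdiv]
    have : (-1 : ℚ) ^ (k + k + 1) = -1 := Odd.neg_one_pow ⟨k, by ring⟩
    rw [this]
    push_cast
    ring
  · subst hk
    have hdiv : (2*k + 1 + 1)^2/4 = k*k + 2*k + 1 := by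
      have : (2*k + 1 + 1)^2 = 4*(k*k + 2*k + 1) := by ring
      omega
    rw [hdiv]
    have : (-1 : ℚ) ^ (2*k + 1 + 1) = 1 := Even.neg_one_pow ⟨k + 1, by ring⟩
    rw [this]
    push_cast
    ring
end

section
/- Let I be an s×s symmetric negative definite integer matrix whose off-diagonal entries lie in {0, 1}, and suppose the graph on {1,…,s} with edges {v,w} whenever I_{vw} = 1 (v ≠ w) is a tree (in particular ∑_{v<w} I_{vw} = s − 1). Let δ_v := #{w ≠ v : I_{vw} = 1} and let K ∈ ℚ^s be the unique vector with (I·K)_v = −I_{vv} − 2 for all v. Then Kᵀ·I·K + s = ∑_{v} I_{vv} + 3s + 2 + ∑_{v,w} (2 − δ_v)(2 − δ_w)·(I^{-1})_{vw}. -/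
/-!
Put `d v = δ_v` and let `𝟙` be the all-ones vector. Since the off-diagonal entries of `I` are `0`
or `1`, the row sums are `I 𝟙 = diag I + d`, so the adjunction relations give `I (K + 𝟙) = d - 2`.
Hence the double sum is `(d - 2)ᵀ I⁻¹ (d - 2) = (K + 𝟙)ᵀ I (K + 𝟙)`, and expanding this by symmetry
only needs `∑_v (I K)_v = -∑_v I_{vv} - 2s` and `∑_v (I 𝟙)_v = ∑_v I_{vv} + ∑_v δ_v`, where
`∑_v δ_v = 2s - 2` because a tree on `s` vertices has `s - 1` edges.
-/

open Finset Matrix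

namespace Matrix

variable {n R : Type*} [Fintype n]

theorem sum_sum_mul_mul_eq_dotProduct_mulVec [CommSemiring R] (A : Matrix n n R) (y : n → R) :
    ∑ i, ∑ j, y i * y j * A i j = y ⬝ᵥ A *ᵥ y := by
  simp only [dotProduct, mulVec, mul_sum]
  exact sum_congr rfl fun i _ => sum_congr rfl fun j _ => by ring

theorem dotProduct_inv_mulVec_of_mulVec_eq [DecidableEq n] [CommRing R] {A : Matrix n n R}
    (hA : IsUnit A) {x y : n → R} (h : A *ᵥ x = y) :
    y ⬝ᵥ A⁻¹ *ᵥ y = x ⬝ᵥ A *ᵥ x := by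
  rw [← h, mulVec_mulVec, nonsing_inv_mul A ((isUnit_iff_isUnit_det A).mp hA), one_mulVec,
    dotProduct_comm]

theorem IsSymm.add_dotProduct_mulVec_add [CommRing R] {A : Matrix n n R} (hA : A.IsSymm)
    (x y : n → R) :
    (x + y) ⬝ᵥ A *ᵥ (x + y) = x ⬝ᵥ A *ᵥ x + 2 * (y ⬝ᵥ A *ᵥ x) + y ⬝ᵥ A *ᵥ y := by
  have hswap : x ⬝ᵥ A *ᵥ y = y ⬝ᵥ A *ᵥ x := by
    rw [dotProduct_mulVec, dotProduct_comm, ← mulVec_transpose, hA.eq]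
  rw [mulVec_add, dotProduct_add, add_dotProduct, add_dotProduct, hswap]
  ring

theorem sum_row_eq_diag_add_card [DecidableEq n] [AddCommMonoidWithOne R] [DecidableEq R]
    (A : Matrix n n R) (hoff : ∀ v w, v ≠ w → A v w = 0 ∨ A v w = 1) (v : n) :
    ∑ w, A v w = A v v + #{u | u ≠ v ∧ A v u = 1} := by
  rw [← sum_erase_add _ _ (mem_univ v), add_comm, card_eq_sum_ones, Nat.cast_sum, sum_filter]
  congr 1
  rw [← sum_erase_add _ _ (mem_univ v), if_neg (fun h => h.1 rfl), add_zero]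
  refine sum_congr rfl fun w hw => ?_
  have hwv := ne_of_mem_erase hw
  rcases hoff v w hwv.symm with h | h <;> simp [h, hwv]

end Matrix

theorem SimpleGraph.IsTree.sum_degrees_add_two {V : Type*} [Fintype V] {G : SimpleGraph V}
    [DecidableRel G.Adj] (hG : G.IsTree) : ∑ v, G.degree v + 2 = 2 * Fintype.card V := by
  classical
  rw [G.sum_degrees_eq_twice_card_edges, ← hG.card_edgeFinset]
  ring

theorem Matrix.IsSymm.degree_fromRel_eq_card {n α : Type*} [Fintype n] [DecidableEq n] [One α] [DecidableEq α]
    {A : Matrix n n α} (hA : A.IsSymm) [DecidableRel (SimpleGraph.fromRel fun v w => A v w = 1).Adj]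
    (v : n) : (SimpleGraph.fromRel fun v w => A v w = 1).degree v = #{u | u ≠ v ∧ A v u = 1} := by
  rw [SimpleGraph.degree, SimpleGraph.neighborFinset_eq_filter]
  congr 1
  apply filter_congr
  intro u _
  rw [SimpleGraph.fromRel_adj, ← hA.apply v u, or_self, ne_comm]

/-- For a negative definite symmetric integer matrix `I` whose off-diagonal
entries are `0` or `1` and whose associated graph is a tree, and the canonical
vector `K` with `(I·K)_v = -I_{vv} - 2`, one has
`Kᵀ·I·K + s = ∑_v I_{vv} + 3s + 2 + ∑_{v,w} (2-δ_v)(2-δ_w)(I⁻¹)_{vw}`,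
where `δ_v` is the valency of `v`. -/
theorem stmt18 (s : ℕ) (I : Matrix (Fin s) (Fin s) ℤ)
    (hsymm : I.IsSymm)
    (hoff : ∀ v w, v ≠ w → I v w = 0 ∨ I v w = 1)
    (hneg : (-(I.map ((↑) : ℤ → ℚ))).PosDef)
    (htree : (SimpleGraph.fromRel (fun v w => I v w = 1)).IsTree)
    (K : Fin s → ℚ)
    (hK : (I.map ((↑) : ℤ → ℚ)).mulVec K = fun v => -(I v v : ℚ) - 2) :
    dotProduct K ((I.map ((↑) : ℤ → ℚ)).mulVec K) + (s : ℚ)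
      = ∑ v, (I v v : ℚ) + 3 * (s : ℚ) + 2
        + ∑ v, ∑ w,
            (2 - ((Finset.univ.filter (fun u => u ≠ v ∧ I v u = 1)).card : ℚ)) *
            (2 - ((Finset.univ.filter (fun u => u ≠ w ∧ I w u = 1)).card : ℚ)) *
            ((I.map ((↑) : ℤ → ℚ))⁻¹ v w) := by
  classical
  set J := I.map ((↑) : ℤ → ℚ)
  set d : Fin s → ℚ := fun v => (#{u | u ≠ v ∧ I v u = 1} : ℚ)
  have hJsymm : J.IsSymm := hsymm.map _
  have hunit : IsUnit J := (IsUnit.neg_iff J).mp hneg.isUnit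
  have hrow : J *ᵥ 1 = fun v => (I v v : ℚ) + d v := funext fun v => by
    simpa [J, mulVec, dotProduct] using
      congrArg (Int.cast : ℤ → ℚ) (I.sum_row_eq_diag_add_card hoff v)
  have hdeg : ∑ v, d v = 2 * s - 2 := by
    have hsum := htree.sum_degrees_add_two
    simp only [hsymm.degree_fromRel_eq_card, Fintype.card_fin] at hsum
    have hsumℚ := congrArg (Nat.cast : ℕ → ℚ) hsum
    push_cast at hsumℚ
    linarith
  have hK1 : J *ᵥ (K + 1) = -fun v => 2 - d v := by
    rw [mulVec_add, hK, hrow]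
    ext v
    simp only [Pi.add_apply, Pi.neg_apply]
    ring
  have hquad : (fun v => 2 - d v) ⬝ᵥ J⁻¹ *ᵥ (fun v => 2 - d v) = (K + 1) ⬝ᵥ J *ᵥ (K + 1) := by
    rw [← dotProduct_inv_mulVec_of_mulVec_eq hunit hK1, mulVec_neg, neg_dotProduct,
      dotProduct_neg, neg_neg]
  rw [sum_sum_mul_mul_eq_dotProduct_mulVec, hquad, hJsymm.add_dotProduct_mulVec_add, hrow, hK]
  simp only [one_dotProduct, sum_add_distrib, sum_sub_distrib, sum_neg_distrib, hdeg, sum_const,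
    card_univ, Fintype.card_fin, nsmul_eq_mul]
  ring
end
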